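/- arXiv:0908.2683 — 2 statements merged into one kernel-verified Lean document; each statement's English description precedes it below -/
import Mathlib

section
/- For the constant-speed control law u = -U·(p - c)/‖p - c‖ if ‖p - c‖ ≥ 1 and u = -U·(p - c) otherwise (U > 0, c fixed), every solution starting in a compact convex set containing c converges to c as t → ∞. -/
/-!
`V(t) = ‖p t - c‖²` has derivative `2 ⟪p t - c, u (p t)⟫`, which equals `-2U‖p t - c‖` far from
`c` and `-2U‖p t - c‖²` near it. So `V` is nonincreasing, the trajectory stays in the ball of
radius `R = max ‖p 0 - c‖ 1`, and there `V' ≤ -(2U/R) V`; Grönwall gives exponential decay of `V`.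
-/

open scoped Topology RealInnerProductSpace
open Filter Real

theorem le_mul_exp_of_deriv_le_mul {V V' : ℝ → ℝ} {K : ℝ} (hV : ∀ t, HasDerivAt V (V' t) t)
    (hle : ∀ t, 0 ≤ t → V' t ≤ K * V t) {t : ℝ} (ht : 0 ≤ t) : V t ≤ V 0 * exp (K * t) := by
  have := le_gronwallBound_of_liminf_deriv_right_le (f := V) (f' := V') (δ := V 0) (K := K)
    (ε := 0) (a := 0) (b := t) (fun s _ => (hV s).continuousAt.continuousWithinAt)
    (fun s _ _ hr => (hV s).hasDerivWithinAt.liminf_right_slope_le hr) le_rfl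
    (fun s hs => by simpa using hle s hs.1) t ⟨ht, le_rfl⟩
  simpa [gronwallBound_ε0] using this

variable {E : Type*} [NormedAddCommGroup E]

theorem tendsto_of_norm_sub_sq_le_mul_exp {p : ℝ → E} {c : E} {C k : ℝ} (hk : 0 < k)
    (h : ∀ t, 0 ≤ t → ‖p t - c‖ ^ 2 ≤ C * exp (-k * t)) : Tendsto p atTop (𝓝 c) := by
  have hexp : Tendsto (fun t => C * exp (-k * t)) atTop (𝓝 0) := by
    simpa using ((tendsto_exp_atBot.comp
      (tendsto_id.const_mul_atTop_of_neg (neg_neg_of_pos hk))).const_mul C)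
  have hsq : Tendsto (fun t => ‖p t - c‖ ^ 2) atTop (𝓝 0) :=
    tendsto_of_tendsto_of_tendsto_of_le_of_le' tendsto_const_nhds hexp
      (Eventually.of_forall fun _ => sq_nonneg _) (eventually_ge_atTop 0 |>.mono h)
  rw [tendsto_iff_norm_sub_tendsto_zero]
  simpa [sqrt_sq (norm_nonneg _)] using hsq.sqrt

variable [InnerProductSpace ℝ E]

section Trajectory

variable {f : E → E} {p : ℝ → E} {c : E}

theorem hasDerivAt_norm_sub_sq (hp : ∀ t, HasDerivAt p (f (p t)) t) (t : ℝ) :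
    HasDerivAt (fun s => ‖p s - c‖ ^ 2) (2 * ⟪p t - c, f (p t)⟫) t :=
  ((hp t).sub_const c).norm_sq

theorem norm_sub_le_of_inner_nonpos (hp : ∀ t, HasDerivAt p (f (p t)) t)
    (hf : ∀ x, ⟪x - c, f x⟫ ≤ 0) {s t : ℝ} (hst : s ≤ t) : ‖p t - c‖ ≤ ‖p s - c‖ := by
  have hanti : Antitone fun t => ‖p t - c‖ ^ 2 :=
    antitone_of_hasDerivAt_nonpos (hasDerivAt_norm_sub_sq hp) fun t =>
      mul_nonpos_of_nonneg_of_nonpos zero_le_two (hf (p t))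
  exact (pow_le_pow_iff_left₀ (norm_nonneg _) (norm_nonneg _) two_ne_zero).1 (hanti hst)

end Trajectory

noncomputable def constSpeedField (U : ℝ) (c x : E) : E :=
  if 1 ≤ ‖x - c‖ then -(U / ‖x - c‖) • (x - c) else -U • (x - c)

theorem inner_constSpeedField_le {U R : ℝ} (hU : 0 ≤ U) (hR : 1 ≤ R) {c x : E}
    (hx : ‖x - c‖ ≤ R) : ⟪x - c, constSpeedField U c x⟫ ≤ -(U / R) * ‖x - c‖ ^ 2 := by
  have hR0 : 0 < R := one_pos.trans_le hR
  unfold constSpeedField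
  split_ifs with hfar
  · have hr : 0 < ‖x - c‖ := one_pos.trans_le hfar
    rw [inner_smul_right, real_inner_self_eq_norm_sq]
    calc -(U / ‖x - c‖) * ‖x - c‖ ^ 2 = -U * ‖x - c‖ := by field_simp
      _ ≤ -(U / R) * ‖x - c‖ ^ 2 := by
        have : U / R * ‖x - c‖ ^ 2 ≤ U * ‖x - c‖ := by
          rw [div_mul_eq_mul_div, div_le_iff₀ hR0, sq, ← mul_assoc]
          exact mul_le_mul_of_nonneg_left hx (mul_nonneg hU hr.le)
        linarith
  · rw [inner_smul_right, real_inner_self_eq_norm_sq]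
    have : U / R ≤ U := div_le_self hU hR
    nlinarith [sq_nonneg ‖x - c‖]

theorem inner_constSpeedField_nonpos {U : ℝ} (hU : 0 ≤ U) (c x : E) :
    ⟪x - c, constSpeedField U c x⟫ ≤ 0 :=
  (inner_constSpeedField_le hU (le_max_right _ _) (le_max_left _ 1)).trans <|
    mul_nonpos_of_nonpos_of_nonneg (neg_nonpos.2 (by positivity)) (sq_nonneg _)

theorem constant_speed_convergence_general {d : ℕ}
    (U : ℝ) (hU : 0 < U)
    (c : EuclideanSpace ℝ (Fin d))
    (u : EuclideanSpace ℝ (Fin d) → EuclideanSpace ℝ (Fin d))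
    (hu : ∀ x, u x =
      if 1 ≤ ‖x - c‖ then -(U / ‖x - c‖) • (x - c) else -U • (x - c))
    (p : ℝ → EuclideanSpace ℝ (Fin d))
    (hp : ∀ t : ℝ, HasDerivAt p (u (p t)) t) :
    Filter.Tendsto p Filter.atTop (𝓝 c) := by
  obtain rfl : u = constSpeedField U c := funext hu
  set R := max ‖p 0 - c‖ 1
  have hR : 1 ≤ R := le_max_right _ _
  have hball : ∀ t, 0 ≤ t → ‖p t - c‖ ≤ R := fun t ht =>
    (norm_sub_le_of_inner_nonpos hp (inner_constSpeedField_nonpos hU.le c) ht).trans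
      (le_max_left _ _)
  have hk : 0 < 2 * (U / R) := by have := one_pos.trans_le hR; positivity
  refine tendsto_of_norm_sub_sq_le_mul_exp hk fun t ht =>
    le_mul_exp_of_deriv_le_mul (hasDerivAt_norm_sub_sq hp) (fun s hs => ?_) ht
  calc 2 * ⟪p s - c, constSpeedField U c (p s)⟫
      ≤ 2 * (-(U / R) * ‖p s - c‖ ^ 2) := by
        gcongr; exact inner_constSpeedField_le hU.le hR (hball s hs)
    _ = -(2 * (U / R)) * ‖p s - c‖ ^ 2 := by ring

/-- for the constant-speed control law (`u = -U (p-c)/‖p-c‖`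
when `‖p - c‖ ≥ 1` and `u = -U (p - c)` otherwise), every solution starting
in a compact convex set containing `c` converges to `c`. -/
theorem constant_speed_convergence {d : ℕ}
    (U : ℝ) (hU : 0 < U)
    (c : EuclideanSpace ℝ (Fin d))
    (u : EuclideanSpace ℝ (Fin d) → EuclideanSpace ℝ (Fin d))
    (hu : ∀ x, u x =
      if 1 ≤ ‖x - c‖ then -(U / ‖x - c‖) • (x - c) else -U • (x - c))
    (K : Set (EuclideanSpace ℝ (Fin d))) (hKc : IsCompact K)
    (hKconv : Convex ℝ K) (hcK : c ∈ K)
    (p : ℝ → EuclideanSpace ℝ (Fin d)) (hp0 : p 0 ∈ K)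
    (hp : ∀ t : ℝ, HasDerivAt p (u (p t)) t) :
    Filter.Tendsto p Filter.atTop (𝓝 c) :=
  constant_speed_convergence_general U hU c u hu p hp
end

section
/- Let φ : Q → [0,∞) be integrable on a measurable set V ⊂ ℝ^d, let f(r) = k·e^{-αr²} with k, α > 0, and define H(p) = ∫_V φ(q)·f(‖p - q‖) dq. Then the gradient satisfies ∇_p H(p) = -2α·∫_V φ(q)·k·e^{-α‖p-q‖²}·(p - q) dq, i.e., ∇_p H(p) = -M̃·(p - C̃) where M̃ = ∫_V φ̃(q) dq, C̃ = (1/M̃)∫_V q·φ̃(q) dq and φ̃(q) = 2α·k·e^{-α‖p-q‖²}·φ(q) (assuming M̃ > 0). -/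
/-!
Differentiation under the integral sign: the kernel `g y = k exp(-α‖y‖²)` is bounded and has a
bounded continuous gradient `-2αk exp(-α‖y‖²) y` (since `r e^{-αr²} ≤ 1/√α`), so for integrable
`φ` the derivative of `x ↦ ∫ φ q g(x - q) dq` is dominated by a multiple of `|φ|`. The second
identity is linearity of the integral: `∫_V φ̃ q (p - q) dq = M̃ p - ∫_V φ̃ q q dq`.
-/

open MeasureTheory InnerProductSpace Filter

lemma Real.exp_neg_mul_sq_mul_le {α : ℝ} (hα : 0 < α) (r : ℝ) :
    Real.exp (-α * r ^ 2) * r ≤ (√α)⁻¹ := by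
  set y := √α * r
  have hy : y ≤ Real.exp (α * r ^ 2) := calc
    y ≤ y ^ 2 + 1 := by nlinarith [sq_nonneg (y - 1)]
    _ ≤ Real.exp (y ^ 2) := Real.add_one_le_exp _
    _ = Real.exp (α * r ^ 2) := by rw [mul_pow, Real.sq_sqrt hα.le]
  have hs : 0 < √α := Real.sqrt_pos.2 hα
  calc Real.exp (-α * r ^ 2) * r = (√α)⁻¹ * (y / Real.exp (α * r ^ 2)) := by
        rw [neg_mul, Real.exp_neg]; field_simp; exact mul_comm _ _
    _ ≤ (√α)⁻¹ * 1 := by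
        gcongr; exact (div_le_one (Real.exp_pos _)).2 hy
    _ = (√α)⁻¹ := mul_one _

section Gaussian

variable {E : Type*} [NormedAddCommGroup E]

lemma abs_mul_exp_neg_mul_norm_sq_le {α : ℝ} (hα : 0 ≤ α) (c : ℝ) (y : E) :
    |c * Real.exp (-α * ‖y‖ ^ 2)| ≤ |c| := by
  rw [abs_mul, Real.abs_exp]
  exact mul_le_of_le_one_right (abs_nonneg c)
    (Real.exp_le_one_iff.2 (by nlinarith [sq_nonneg ‖y‖]))

lemma norm_mul_exp_neg_mul_norm_sq_smul_le [NormedSpace ℝ E] {α : ℝ} (hα : 0 < α) (c : ℝ)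
    (y : E) : ‖(c * Real.exp (-α * ‖y‖ ^ 2)) • y‖ ≤ |c| * (√α)⁻¹ := by
  rw [norm_smul, norm_mul, Real.norm_eq_abs, Real.norm_of_nonneg (Real.exp_pos _).le, mul_assoc]
  exact mul_le_mul_of_nonneg_left (Real.exp_neg_mul_sq_mul_le hα _) (abs_nonneg c)

lemma hasGradientAt_mul_exp_neg_mul_norm_sq [InnerProductSpace ℝ E] [CompleteSpace E]
    (c α : ℝ) (y : E) :
    HasGradientAt (fun x : E => c * Real.exp (-α * ‖x‖ ^ 2))
      ((-(2 * α) * c * Real.exp (-α * ‖y‖ ^ 2)) • y) y := by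
  rw [hasGradientAt_iff_hasFDerivAt]
  refine (((hasStrictFDerivAt_norm_sq y).hasFDerivAt.const_mul (-α)).exp.const_mul c).congr_fderiv
    ?_
  ext v
  simp only [neg_mul, neg_smul, smul_neg, neg_apply, smul_apply, coe_innerSL_apply, nsmul_eq_mul,
    Nat.cast_ofNat, smul_eq_mul, map_neg, map_smul, toDual_apply_apply, neg_inj]
  ring

end Gaussian

section Convolution

variable {E : Type*} [NormedAddCommGroup E] [MeasurableSpace E] [BorelSpace E]
  [SecondCountableTopology E] {μ : Measure E} {φ : E → ℝ}

lemma MeasureTheory.Integrable.smul_comp_sub {F : Type*} [NormedAddCommGroup F] [NormedSpace ℝ F]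
    {G : E → F} {C : ℝ} (hφ : Integrable φ μ) (hG : Continuous G) (hGC : ∀ y, ‖G y‖ ≤ C)
    (x : E) : Integrable (fun q => φ q • G (x - q)) μ :=
  hφ.smul_bdd C (hG.comp (continuous_const.sub continuous_id)).aestronglyMeasurable
    (.of_forall fun _ => hGC _)

lemma hasFDerivAt_integral_mul_comp_sub [NormedSpace ℝ E] (hφ : Integrable φ μ)
    {g : E → ℝ} {g' : E → StrongDual ℝ E} (hg : ∀ y, HasFDerivAt g (g' y) y)
    (hg'c : Continuous g') {B C : ℝ} (hgB : ∀ y, ‖g y‖ ≤ B) (hg'C : ∀ y, ‖g' y‖ ≤ C) (p : E) :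
    HasFDerivAt (fun x => ∫ q, φ q * g (x - q) ∂μ) (∫ q, φ q • g' (p - q) ∂μ) p := by
  have hgc : Continuous g := continuous_iff_continuousAt.2 fun y => (hg y).continuousAt
  refine hasFDerivAt_integral_of_dominated_of_fderiv_le (bound := fun q => ‖φ q‖ * C)
    univ_mem (.of_forall fun x => (hφ.smul_comp_sub hgc hgB x).aestronglyMeasurable)
    (hφ.smul_comp_sub hgc hgB p) (hφ.smul_comp_sub hg'c hg'C p).aestronglyMeasurable
    (.of_forall fun q x _ => ?_) (hφ.norm.mul_const C)
    (.of_forall fun q x _ => ((hasFDerivAt_comp_sub q).2 (hg (x - q))).const_mul (φ q))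
  rw [norm_smul]
  exact mul_le_mul_of_nonneg_left (hg'C _) (norm_nonneg _)

theorem hasGradientAt_integral_mul_comp_sub [InnerProductSpace ℝ E] [CompleteSpace E]
    (hφ : Integrable φ μ) {g : E → ℝ} {G : E → E} (hg : ∀ y, HasGradientAt g (G y) y)
    (hGc : Continuous G) {B C : ℝ} (hgB : ∀ y, ‖g y‖ ≤ B) (hGC : ∀ y, ‖G y‖ ≤ C) (p : E) :
    HasGradientAt (fun x => ∫ q, φ q * g (x - q) ∂μ) (∫ q, φ q • G (p - q) ∂μ) p := by
  rw [hasGradientAt_iff_hasFDerivAt]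
  refine (hasFDerivAt_integral_mul_comp_sub hφ (g' := toDual ℝ E ∘ G)
    (fun y => (hg y).hasFDerivAt) ((toDual ℝ E).continuous.comp hGc) hgB
    (fun y => by simpa using hGC y) p).congr_fderiv ?_
  rw [← LinearIsometryEquiv.coe_toLinearIsometry, ← LinearIsometry.integral_comp_comm]
  simp only [Function.comp_apply, map_smul, LinearIsometryEquiv.coe_toLinearIsometry]

end Convolution

theorem integral_smul_sub_eq_mass_smul_sub_centroid {E : Type*} [NormedAddCommGroup E]
    [NormedSpace ℝ E] [CompleteSpace E] [MeasurableSpace E] {μ : Measure E} {w : E → ℝ} (p : E)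
    (hw : Integrable w μ) (hwp : Integrable (fun q => w q • (p - q)) μ)
    (hM : ∫ q, w q ∂μ ≠ 0) :
    ∫ q, w q • (p - q) ∂μ = (∫ q, w q ∂μ) • (p - (1 / ∫ q, w q ∂μ) • ∫ q, w q • q ∂μ) := by
  have hwq : Integrable (fun q => w q • q) μ := by
    refine ((hw.smul_const p).sub hwp).congr (.of_forall fun q => ?_)
    simp only [Pi.sub_apply, smul_sub, sub_sub_cancel]
  rw [smul_sub, smul_smul, mul_one_div_cancel hM, one_smul, ← integral_smul_const,
    ← integral_sub (hw.smul_const p) hwq]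
  simp only [smul_sub]

theorem gradient_of_cell_objective_general {d : ℕ}
    (V : Set (EuclideanSpace ℝ (Fin d)))
    (φ : EuclideanSpace ℝ (Fin d) → ℝ)
    (hφint : IntegrableOn φ V volume)
    (k α : ℝ) (hα : 0 < α)
    (p : EuclideanSpace ℝ (Fin d))
    (φt : EuclideanSpace ℝ (Fin d) → ℝ)
    (hφt : ∀ q, φt q = 2 * α * k * Real.exp (-α * ‖p - q‖ ^ 2) * φ q)
    (Mt : ℝ) (hMt : Mt = ∫ q in V, φt q) (hMtpos : 0 < Mt)
    (Ct : EuclideanSpace ℝ (Fin d)) (hCt : Ct = (1 / Mt) • ∫ q in V, φt q • q) :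
    HasGradientAt
      (fun x : EuclideanSpace ℝ (Fin d) =>
        ∫ q in V, φ q * (k * Real.exp (-α * ‖x - q‖ ^ 2)))
      ((-(2 * α)) • ∫ q in V, (φ q * (k * Real.exp (-α * ‖p - q‖ ^ 2))) • (p - q))
      p ∧
    ((-(2 * α)) • ∫ q in V, (φ q * (k * Real.exp (-α * ‖p - q‖ ^ 2))) • (p - q))
      = -Mt • (p - Ct) := by
  have hcont (c : ℝ) : Continuous fun y : EuclideanSpace ℝ (Fin d) =>
      (c * Real.exp (-α * ‖y‖ ^ 2)) • y := by fun_prop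
  have hgrad := hasGradientAt_integral_mul_comp_sub hφint
    (hasGradientAt_mul_exp_neg_mul_norm_sq k α) (hcont _)
    (abs_mul_exp_neg_mul_norm_sq_le hα.le k) (norm_mul_exp_neg_mul_norm_sq_smul_le hα _) p
  have hφt_int : IntegrableOn φt V :=
    (hφint.smul_comp_sub (G := fun y => 2 * α * k * Real.exp (-α * ‖y‖ ^ 2)) (by fun_prop)
      (abs_mul_exp_neg_mul_norm_sq_le hα.le _) p).congr
      (.of_forall fun q => by simp only [hφt, smul_eq_mul]; ring)
  have hφtp_int : IntegrableOn (fun q => φt q • (p - q)) V :=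
    (hφint.smul_comp_sub (hcont _) (norm_mul_exp_neg_mul_norm_sq_smul_le hα (2 * α * k)) p).congr
      (.of_forall fun q => by simp only [hφt, smul_smul]; ring_nf)
  subst hMt hCt
  refine ⟨?_, ?_⟩
  · convert hgrad using 1
    rw [← integral_smul]
    congr 1; funext q
    rw [smul_smul, smul_smul]
    exact congrArg (fun c : ℝ => c • (p - q)) (by ring)
  · rw [neg_smul (∫ q in V, φt q),
      ← integral_smul_sub_eq_mass_smul_sub_centroid p hφt_int hφtp_int hMtpos.ne',
      ← integral_smul, ← integral_neg]
    congr 1; funext q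
    rw [hφt, smul_smul, ← neg_smul]
    exact congrArg (fun c : ℝ => c • (p - q)) (by ring)

/-- gradient of the single-cell objective
`H p = ∫_V φ q * k exp(-α‖p - q‖²) dq` is
`-2α ∫_V φ q * k exp(-α‖p-q‖²) • (p - q) dq = -M̃ • (p - C̃)`. -/
theorem gradient_of_cell_objective {d : ℕ}
    (V : Set (EuclideanSpace ℝ (Fin d))) (hV : MeasurableSet V)
    (φ : EuclideanSpace ℝ (Fin d) → ℝ)
    (hφpos : ∀ q ∈ V, 0 ≤ φ q)
    (hφint : IntegrableOn φ V volume)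
    (k α : ℝ) (hk : 0 < k) (hα : 0 < α)
    (p : EuclideanSpace ℝ (Fin d))
    (φt : EuclideanSpace ℝ (Fin d) → ℝ)
    (hφt : ∀ q, φt q = 2 * α * k * Real.exp (-α * ‖p - q‖ ^ 2) * φ q)
    (Mt : ℝ) (hMt : Mt = ∫ q in V, φt q) (hMtpos : 0 < Mt)
    (Ct : EuclideanSpace ℝ (Fin d)) (hCt : Ct = (1 / Mt) • ∫ q in V, φt q • q) :
    HasGradientAt
      (fun x : EuclideanSpace ℝ (Fin d) =>
        ∫ q in V, φ q * (k * Real.exp (-α * ‖x - q‖ ^ 2)))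
      ((-(2 * α)) • ∫ q in V, (φ q * (k * Real.exp (-α * ‖p - q‖ ^ 2))) • (p - q))
      p ∧
    ((-(2 * α)) • ∫ q in V, (φ q * (k * Real.exp (-α * ‖p - q‖ ^ 2))) • (p - q))
      = -Mt • (p - Ct) :=
  gradient_of_cell_objective_general V φ hφint k α hα p φt hφt Mt hMt hMtpos Ct hCt
end
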